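/- Let J be a symmetric positive definite block matrix in CM_L form: block tridiagonal plus possibly nonzero blocks D_k in the last block column (and their transposes in the last block row). Then J admits a unique factorization J = (𝓖^L)' (G^L)⁻¹ 𝓖^L corresponding to a forward CM_L model: 𝓖^L has identity diagonal blocks, subdiagonal blocks -G_{k,k-1}, last-column blocks -G_{k,N} (k ∈ [1,N-1]), with G^L = diag(G₀,…,G_N) positive definite, and the parameters are determined by the backward recursion G_{N-1}⁻¹ = A_{N-1}, G_{k,k-1} = -G_k B_{k-1}', G_{k-1}⁻¹ = A_{k-1} - G_{k,k-1}' G_k⁻¹ G_{k,k-1}, G_{k-1,N} = G_{k-1} G_{k,k-1}' G_k⁻¹ G_{k,N} - G_{k-1} D_{k-1}. -/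

import Mathlib

open Matrix MeasureTheory

/-- Square `d × d` real matrices (one block). -/
abbrev SqMat (d : ℕ) := Matrix (Fin d) (Fin d) ℝ

/-- Big `(N+1)d × (N+1)d` real matrices, viewed as `(N+1) × (N+1)` arrays of
`d × d` blocks. -/
abbrev BigMat (N d : ℕ) := Matrix (Fin (N+1) × Fin d) (Fin (N+1) × Fin d) ℝ

/-- The `(i,j)` block of a big matrix. -/
def blk {N d : ℕ} (A : BigMat N d) (i j : Fin (N+1)) : SqMat d :=
  fun a b => A (i, a) (j, b)

/-- Block diagonal big matrix with diagonal blocks `D 0, …, D N`. -/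
def bdiag (N d : ℕ) (D : ℕ → SqMat d) : BigMat N d :=
  fun p q => if (p.1 : ℕ) = (q.1 : ℕ) then D (p.1 : ℕ) p.2 q.2 else 0

/-- The block lower bidiagonal matrix `𝓜` of a forward Markov model: identity blocks
on the diagonal and block `-(T k) = -M_{k,k-1}` in position `(k, k-1)` for `k ∈ [1,N]`. -/
def lowerBidiag (N d : ℕ) (T : ℕ → SqMat d) : BigMat N d :=
  fun p q =>
    if (p.1 : ℕ) = (q.1 : ℕ) then (if p.2 = q.2 then 1 else 0)
    else if (q.1 : ℕ) + 1 = (p.1 : ℕ) then -(T (p.1 : ℕ) p.2 q.2) else 0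

/-- The block upper bidiagonal matrix `𝓜ᴮ` of a backward Markov model: identity blocks
on the diagonal and block `-(T k) = -Mᴮ_{k,k+1}` in position `(k, k+1)` for `k ∈ [0,N-1]`. -/
def upperBidiag (N d : ℕ) (T : ℕ → SqMat d) : BigMat N d :=
  fun p q =>
    if (p.1 : ℕ) = (q.1 : ℕ) then (if p.2 = q.2 then 1 else 0)
    else if (p.1 : ℕ) + 1 = (q.1 : ℕ) then -(T (p.1 : ℕ) p.2 q.2) else 0

/-- The matrix `𝓖ᴸ` of a forward CM_L model (boundary condition of the first type):
identity diagonal blocks, subdiagonal blocks `-(Gs k) = -G_{k,k-1}` for `k ∈ [1,N-1]`,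
blocks `-(Gn k) = -G_{k,N}` in the last block column for `k ∈ [1,N-1]`, and block
`-GN0 = -G_{N,0}` in position `(N,0)`. -/
def cmlMat (N d : ℕ) (Gs Gn : ℕ → SqMat d) (GN0 : SqMat d) : BigMat N d :=
  fun p q =>
    if (p.1 : ℕ) = (q.1 : ℕ) then (if p.2 = q.2 then 1 else 0)
    else if (q.1 : ℕ) + 1 = (p.1 : ℕ) ∧ (p.1 : ℕ) ≤ N - 1 then -(Gs (p.1 : ℕ) p.2 q.2)
    else if (p.1 : ℕ) = N ∧ (q.1 : ℕ) = 0 then -(GN0 p.2 q.2)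
    else if (q.1 : ℕ) = N ∧ 1 ≤ (p.1 : ℕ) then -(Gn (p.1 : ℕ) p.2 q.2)
    else 0

namespace CMLaux

/-- Column-block matrices. -/
abbrev Vc (N d : ℕ) := Matrix (Fin (N+1) × Fin d) (Fin d) ℝ

variable {N d : ℕ}

def idx (N : ℕ) (k : ℕ) : Fin (N+1) := ⟨k % (N+1), Nat.mod_lt _ (Nat.succ_pos N)⟩

lemma idx_val {k : ℕ} (h : k ≤ N) : ((idx N k : Fin (N+1)) : ℕ) = k :=
  Nat.mod_eq_of_lt (by omega)

lemma idx_eq (i : Fin (N+1)) : idx N (i : ℕ) = i :=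
  Fin.ext (Nat.mod_eq_of_lt i.isLt)

def colM (F : Vc N d) (i : Fin (N+1)) : SqMat d := fun a b => F (i, a) b

def emb (N d : ℕ) (i : Fin (N+1)) : Vc N d :=
  fun p b => if p.1 = i then (1 : SqMat d) p.2 b else 0

lemma colM_emb (i j : Fin (N+1)) :
    colM (emb N d i) j = if j = i then (1 : SqMat d) else 0 := by
  funext a b
  simp only [colM, emb]
  split_ifs <;> simp_all [Matrix.one_apply]

lemma colM_add (F G : Vc N d) (i) : colM (F + G) i = colM F i + colM G i := rfl

lemma colM_mulr (F : Vc N d) (S : SqMat d) (i) : colM (F * S) i = colM F i * S := by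
  funext a b
  simp [colM, Matrix.mul_apply]

lemma colM_big (X : BigMat N d) (F : Vc N d) (i : Fin (N+1)) :
    colM (X * F) i = ∑ k : Fin (N+1), blk X i k * colM F k := by
  funext a b
  simp only [colM, Matrix.mul_apply, Matrix.sum_apply, blk]
  rw [Fintype.sum_prod_type]

lemma embT_mul (i : Fin (N+1)) (F : Vc N d) : (emb N d i)ᵀ * F = colM F i := by
  funext a b
  simp only [Matrix.mul_apply, Matrix.transpose_apply, emb, colM]
  rw [Fintype.sum_prod_type]
  rw [Finset.sum_eq_single i]
  · simp [Matrix.one_apply]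
  · intro k _ hk
    simp [hk]
  · simp

lemma embT_mul_big (i : Fin (N+1)) (X : BigMat N d) (F : Vc N d) :
    (emb N d i)ᵀ * X * F = ∑ k : Fin (N+1), blk X i k * colM F k := by
  rw [Matrix.mul_assoc, embT_mul, colM_big]

lemma embT_mul_emb (i j : Fin (N+1)) (X : BigMat N d) :
    (emb N d i)ᵀ * X * emb N d j = blk X i j := by
  rw [embT_mul_big]
  rw [Finset.sum_eq_single j]
  · simp [colM_emb]
  · intro k _ hk; simp [colM_emb, hk]
  · simp

lemma mulVec_inj_of_colM_one (F : Vc N d) (i : Fin (N+1)) (h1 : colM F i = 1) :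
    Function.Injective F.mulVec := by
  intro x y hxy
  funext b
  have hx := congrFun hxy (i, b)
  have key : ∀ z : Fin d → ℝ, (F *ᵥ z) (i, b) = z b := by
    intro z
    have : (F *ᵥ z) (i, b) = ∑ c, colM F i b c * z c := by
      simp [Matrix.mulVec, dotProduct, colM]
    rw [this, h1]
    simp [Matrix.one_apply]
  rw [key, key] at hx
  exact hx

lemma posdef_congr {n m : Type*} [Fintype n] [Fintype m] {J : Matrix n n ℝ}
    (hJ : J.PosDef) (F : Matrix n m ℝ) (hF : Function.Injective F.mulVec) :
    (Fᵀ * J * F).PosDef := by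
  refine Matrix.PosDef.of_dotProduct_mulVec_pos ?_ ?_
  · show (Fᵀ * J * F)ᴴ = _
    have hJs : Jᵀ = J := hJ.isHermitian
    calc (Fᵀ * J * F)ᴴ = (Fᵀ * J * F)ᵀ := rfl
      _ = Fᵀ * (Jᵀ * Fᵀᵀ) := by rw [Matrix.transpose_mul, Matrix.transpose_mul]
      _ = Fᵀ * J * F := by rw [hJs, Matrix.transpose_transpose, Matrix.mul_assoc]
  · intro x hx
    have hx' : F *ᵥ x ≠ 0 := by
      intro h
      apply hx
      apply hF
      rw [h, Matrix.mulVec_zero]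
    have := hJ.dotProduct_mulVec_pos hx'
    simpa [star_trivial, ← Matrix.mulVec_mulVec, dotProduct_mulVec,
      Matrix.vecMul_transpose] using this

lemma blk_posDef {J : BigMat N d} (hJ : J.PosDef) (i : Fin (N+1)) :
    (blk J i i).PosDef := by
  have := posdef_congr hJ (emb N d i)
    (mulVec_inj_of_colM_one _ i (by simp [colM_emb]))
  rwa [embT_mul_emb] at this

lemma blk_transpose (X : BigMat N d) (i j) : blk Xᵀ i j = (blk X j i)ᵀ := rfl

lemma blk_ext {X Y : BigMat N d} (h : ∀ i j, blk X i j = blk Y i j) : X = Y := by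
  funext p q
  exact congrFun (congrFun (h p.1 q.1) p.2) q.2

lemma blk_conj (X Z : BigMat N d) (Δ : ℕ → SqMat d) (i j : Fin (N+1)) :
    blk (Xᵀ * bdiag N d Δ * Z) i j
      = ∑ k : Fin (N+1), (blk X k i)ᵀ * Δ (k : ℕ) * blk Z k j := by
  funext a b
  rw [Matrix.mul_assoc]
  simp only [blk, Matrix.mul_apply, Matrix.transpose_apply, bdiag, Matrix.sum_apply]
  rw [Fintype.sum_prod_type]
  refine Finset.sum_congr rfl fun k _ => ?_
  simp_rw [Fintype.sum_prod_type, ite_mul, zero_mul]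
  have step : ∀ y : Fin d,
      (∑ x1 : Fin (N+1), ∑ x2 : Fin d,
        if (k : ℕ) = (x1 : ℕ) then Δ (k : ℕ) y x2 * Z (x1, x2) (j, b) else 0)
      = ∑ x2 : Fin d, Δ (k : ℕ) y x2 * Z (k, x2) (j, b) := by
    intro y
    rw [Finset.sum_comm]
    refine Finset.sum_congr rfl fun x2 _ => ?_
    simp_rw [Fin.val_eq_val]
    rw [Finset.sum_ite_eq]
    simp
  simp_rw [step, Finset.mul_sum, Finset.sum_mul, mul_assoc]
  rw [Finset.sum_comm]


lemma sum_one (f : Fin (N+1) → SqMat d) (a : Fin (N+1))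
    (h : ∀ k, k ≠ a → f k = 0) : ∑ k, f k = f a :=
  Fintype.sum_eq_single a h

lemma sum_two (f : Fin (N+1) → SqMat d) (a b : Fin (N+1)) (hab : a ≠ b)
    (h : ∀ k, k ≠ a → k ≠ b → f k = 0) : ∑ k, f k = f a + f b :=
  Finset.sum_eq_add_of_mem a b (Finset.mem_univ a) (Finset.mem_univ b) hab
    (fun c _ hc => h c hc.1 hc.2)

lemma sum_three (f : Fin (N+1) → SqMat d) (a b c : Fin (N+1))
    (hab : a ≠ b) (hac : a ≠ c) (hbc : b ≠ c)
    (h : ∀ k, k ≠ a → k ≠ b → k ≠ c → f k = 0) :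
    ∑ k, f k = f a + f b + f c := by
  classical
  have hsub : ∑ k, f k = ∑ k ∈ ({a, b, c} : Finset (Fin (N+1))), f k := by
    refine (Finset.sum_subset (Finset.subset_univ _) fun x _ hx => ?_).symm
    simp only [Finset.mem_insert, Finset.mem_singleton, not_or] at hx
    exact h x hx.1 hx.2.1 hx.2.2
  rw [hsub, Finset.sum_insert (by simp [hab, hac]), Finset.sum_insert (by simp [hbc]),
    Finset.sum_singleton, add_assoc]

lemma sum_as_nat (g : Fin (N+1) → SqMat d) :
    ∑ k, g k = ∑ k ∈ Finset.range (N+1), g (idx N k) := by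
  rw [← Fin.sum_univ_eq_sum_range (fun k => g (idx N k))]
  exact Finset.sum_congr rfl fun k _ => by rw [idx_eq]

lemma range_split (hN : 2 ≤ N) (f : ℕ → SqMat d) :
    ∑ k ∈ Finset.range (N+1), f k = f 0 + f N + ∑ k ∈ Finset.Icc 1 (N-1), f k := by
  have hr : Finset.range (N+1) = insert 0 (insert N (Finset.Icc 1 (N-1))) := by
    ext x
    simp only [Finset.mem_range, Finset.mem_insert, Finset.mem_Icc]
    omega
  rw [hr, Finset.sum_insert (by simp only [Finset.mem_insert, Finset.mem_Icc]; omega),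
    Finset.sum_insert (by simp only [Finset.mem_Icc]; omega), ← add_assoc]

lemma blk_cml_val (Gs Gn : ℕ → SqMat d) (GN0 : SqMat d) {kv iv : ℕ}
    (hk : kv ≤ N) (hi : iv ≤ N) :
    blk (cmlMat N d Gs Gn GN0) (idx N kv) (idx N iv) =
      if kv = iv then 1
      else if iv + 1 = kv ∧ kv ≤ N - 1 then -(Gs kv)
      else if kv = N ∧ iv = 0 then -GN0
      else if iv = N ∧ 1 ≤ kv then -(Gn kv)
      else 0 := by
  funext a b
  simp only [blk, cmlMat, idx_val hk, idx_val hi]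
  split_ifs <;> simp_all [Matrix.one_apply]

lemma ne_idx {k : Fin (N+1)} {v : ℕ} (hv : v ≤ N) (h : k ≠ idx N v) : (k : ℕ) ≠ v :=
  fun hh => h (by rw [← hh, idx_eq])


lemma idx_ne {a b : ℕ} (ha : a ≤ N) (hb : b ≤ N) (h : a ≠ b) : idx N a ≠ idx N b :=
  fun hh => h (by rw [← idx_val ha, hh, idx_val hb])

variable (Gs Gn : ℕ → SqMat d) (GN0 : SqMat d)

lemma blk_cml_zero {k : Fin (N+1)} {iv : ℕ} (hi : iv ≤ N)
    (h1 : (k : ℕ) ≠ iv) (h2 : ¬(iv + 1 = (k : ℕ) ∧ (k : ℕ) ≤ N - 1))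
    (h3 : ¬((k : ℕ) = N ∧ iv = 0)) (h4 : ¬(iv = N ∧ 1 ≤ (k : ℕ))) :
    blk (cmlMat N d Gs Gn GN0) k (idx N iv) = 0 := by
  have hk : (k : ℕ) ≤ N := Nat.lt_succ_iff.mp k.isLt
  rw [← idx_eq k, blk_cml_val Gs Gn GN0 hk hi, if_neg h1, if_neg h2, if_neg h3, if_neg h4]

lemma blk_cml_diag {v : ℕ} (hv : v ≤ N) :
    blk (cmlMat N d Gs Gn GN0) (idx N v) (idx N v) = 1 := by
  rw [blk_cml_val Gs Gn GN0 hv hv, if_pos rfl]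

lemma blk_cml_sub {i : ℕ} (h : i + 1 ≤ N - 1) :
    blk (cmlMat N d Gs Gn GN0) (idx N (i+1)) (idx N i) = -(Gs (i+1)) := by
  rw [blk_cml_val Gs Gn GN0 (by omega) (by omega), if_neg (by omega), if_pos ⟨rfl, h⟩]

lemma blk_cml_gn {v : ℕ} (h1 : 1 ≤ v) (h2 : v ≤ N - 1) (hN : 1 ≤ N) :
    blk (cmlMat N d Gs Gn GN0) (idx N v) (idx N N) = -(Gn v) := by
  rw [blk_cml_val Gs Gn GN0 (by omega) le_rfl, if_neg (by omega), if_neg (by omega),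
    if_neg (by omega), if_pos ⟨rfl, h1⟩]

lemma blk_cml_n0 (hN : 1 ≤ N) :
    blk (cmlMat N d Gs Gn GN0) (idx N N) (idx N 0) = -GN0 := by
  rw [blk_cml_val Gs Gn GN0 le_rfl (by omega), if_neg (by omega), if_neg (by omega),
    if_pos ⟨rfl, rfl⟩]


variable (Δ : ℕ → SqMat d)

/-- The product `𝓖ᵀ Δ 𝓖`. -/
noncomputable def prodM (N d : ℕ) (Gs Gn : ℕ → SqMat d) (GN0 : SqMat d)
    (Δ : ℕ → SqMat d) : BigMat N d :=
  (cmlMat N d Gs Gn GN0)ᵀ * bdiag N d Δ * cmlMat N d Gs Gn GN0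

lemma blk_prodM (i j : Fin (N+1)) :
    blk (prodM N d Gs Gn GN0 Δ) i j
      = ∑ k : Fin (N+1), (blk (cmlMat N d Gs Gn GN0) k i)ᵀ * Δ (k : ℕ)
          * blk (cmlMat N d Gs Gn GN0) k j :=
  blk_conj _ _ _ _ _

section BlockValues

variable (hN : 2 ≤ N)
include hN

lemma blkP_diag_mid {j : ℕ} (h1 : 1 ≤ j) (h2 : j ≤ N - 2) :
    blk (prodM N d Gs Gn GN0 Δ) (idx N j) (idx N j)
      = Δ j + (Gs (j+1))ᵀ * Δ (j+1) * Gs (j+1) := by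
  rw [blk_prodM, sum_two _ (idx N j) (idx N (j+1)) (idx_ne (by omega) (by omega) (by omega))]
  · rw [blk_cml_diag, blk_cml_sub Gs Gn GN0 (by omega), idx_val (by omega : j ≤ N),
      idx_val (by omega : j + 1 ≤ N)]
    · simp
    · omega
  · intro k hk1 hk2
    have e1 : (k : ℕ) ≠ j := ne_idx (by omega) hk1
    have e2 : (k : ℕ) ≠ j + 1 := ne_idx (by omega) hk2
    rw [blk_cml_zero Gs Gn GN0 (by omega) e1 (by omega) (by omega) (by omega)]
    simp

lemma blkP_diag_last :
    blk (prodM N d Gs Gn GN0 Δ) (idx N (N-1)) (idx N (N-1)) = Δ (N-1) := by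
  rw [blk_prodM, sum_one _ (idx N (N-1))]
  · rw [blk_cml_diag Gs Gn GN0 (by omega), idx_val (by omega : N - 1 ≤ N)]
    simp
  · intro k hk
    have e1 : (k : ℕ) ≠ N - 1 := ne_idx (by omega) hk
    rw [blk_cml_zero Gs Gn GN0 (by omega) e1 (by omega) (by omega) (by omega)]
    simp

lemma blkP_diag_0 :
    blk (prodM N d Gs Gn GN0 Δ) (idx N 0) (idx N 0)
      = Δ 0 + (Gs 1)ᵀ * Δ 1 * Gs 1 + GN0ᵀ * Δ N * GN0 := by
  rw [blk_prodM, sum_three _ (idx N 0) (idx N 1) (idx N N)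
    (idx_ne (by omega) (by omega) (by omega)) (idx_ne (by omega) (by omega) (by omega))
    (idx_ne (by omega) (by omega) (by omega))]
  · rw [blk_cml_diag Gs Gn GN0 (by omega),
      show (idx N 1 : Fin (N+1)) = idx N (0+1) from rfl, blk_cml_sub Gs Gn GN0 (by omega),
      blk_cml_n0 Gs Gn GN0 (by omega), idx_val (by omega : (0:ℕ) ≤ N),
      idx_val (by omega : 1 ≤ N), idx_val (le_refl N)]
    simp
  · intro k hk1 hk2 hk3
    have e1 : (k : ℕ) ≠ 0 := ne_idx (by omega) hk1
    have e2 : (k : ℕ) ≠ 1 := ne_idx (by omega) hk2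
    have e3 : (k : ℕ) ≠ N := ne_idx (by omega) hk3
    rw [blk_cml_zero Gs Gn GN0 (by omega) e1 (by omega) (by omega) (by omega)]
    simp

lemma blkP_diag_N :
    blk (prodM N d Gs Gn GN0 Δ) (idx N N) (idx N N)
      = Δ N + ∑ k ∈ Finset.Icc 1 (N-1), (Gn k)ᵀ * Δ k * Gn k := by
  rw [blk_prodM, sum_as_nat, range_split hN]
  have h0 : blk (cmlMat N d Gs Gn GN0) (idx N 0) (idx N N) = 0 := by
    have : ((idx N 0 : Fin (N+1)) : ℕ) = 0 := idx_val (by omega)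
    exact blk_cml_zero Gs Gn GN0 le_rfl (by omega) (by omega) (by omega) (by omega)
  rw [h0]
  have hNN : blk (cmlMat N d Gs Gn GN0) (idx N N) (idx N N) = 1 := blk_cml_diag Gs Gn GN0 le_rfl
  rw [hNN]
  have hsum : ∀ k ∈ Finset.Icc 1 (N-1),
      (blk (cmlMat N d Gs Gn GN0) (idx N k) (idx N N))ᵀ * Δ ((idx N k : Fin (N+1)) : ℕ)
        * blk (cmlMat N d Gs Gn GN0) (idx N k) (idx N N)
      = (Gn k)ᵀ * Δ k * Gn k := by
    intro k hk
    simp only [Finset.mem_Icc] at hk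
    rw [blk_cml_gn Gs Gn GN0 hk.1 hk.2 (by omega), idx_val (by omega)]
    simp
  rw [Finset.sum_congr rfl hsum, idx_val (le_refl N)]
  simp

lemma blkP_super {i : ℕ} (h : i + 1 ≤ N - 1) :
    blk (prodM N d Gs Gn GN0 Δ) (idx N i) (idx N (i+1))
      = -((Gs (i+1))ᵀ * Δ (i+1)) := by
  rw [blk_prodM, sum_three _ (idx N i) (idx N (i+1)) (idx N N)
    (idx_ne (by omega) (by omega) (by omega)) (idx_ne (by omega) (by omega) (by omega))
    (idx_ne (by omega) (by omega) (by omega))]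
  · have t1 : blk (cmlMat N d Gs Gn GN0) (idx N i) (idx N (i+1)) = 0 := by
      have : ((idx N i : Fin (N+1)) : ℕ) = i := idx_val (by omega)
      refine blk_cml_zero Gs Gn GN0 (by omega) (by omega) (by omega) (by omega) (by omega)
    have t3 : blk (cmlMat N d Gs Gn GN0) (idx N N) (idx N (i+1)) = 0 := by
      have : ((idx N N : Fin (N+1)) : ℕ) = N := idx_val le_rfl
      refine blk_cml_zero Gs Gn GN0 (by omega) (by omega) (by omega) (by omega) (by omega)
    rw [t1, t3, blk_cml_sub Gs Gn GN0 h, blk_cml_diag Gs Gn GN0 (v := i+1) (by omega),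
      idx_val (by omega : i + 1 ≤ N)]
    simp
  · intro k hk1 hk2 hk3
    have e1 : (k : ℕ) ≠ i := ne_idx (by omega) hk1
    have e2 : (k : ℕ) ≠ i + 1 := ne_idx (by omega) hk2
    have e3 : (k : ℕ) ≠ N := ne_idx (by omega) hk3
    rw [blk_cml_zero Gs Gn GN0 (by omega) e1 (by omega) (by omega) (by omega)]
    simp

lemma blkP_midN {i : ℕ} (h1 : 1 ≤ i) (h2 : i ≤ N - 2) :
    blk (prodM N d Gs Gn GN0 Δ) (idx N i) (idx N N)
      = -(Δ i * Gn i) + (Gs (i+1))ᵀ * Δ (i+1) * Gn (i+1) := by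
  rw [blk_prodM, sum_two _ (idx N i) (idx N (i+1)) (idx_ne (by omega) (by omega) (by omega))]
  · rw [blk_cml_diag Gs Gn GN0 (by omega), blk_cml_sub Gs Gn GN0 (by omega),
      blk_cml_gn Gs Gn GN0 h1 (by omega) (by omega),
      blk_cml_gn Gs Gn GN0 (by omega) (by omega) (by omega),
      idx_val (by omega : i ≤ N), idx_val (by omega : i + 1 ≤ N)]
    simp
  · intro k hk1 hk2
    have e1 : (k : ℕ) ≠ i := ne_idx (by omega) hk1
    have e2 : (k : ℕ) ≠ i + 1 := ne_idx (by omega) hk2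
    rw [blk_cml_zero Gs Gn GN0 (by omega) e1 (by omega) (by omega) (by omega)]
    simp

lemma blkP_lastN :
    blk (prodM N d Gs Gn GN0 Δ) (idx N (N-1)) (idx N N)
      = -(Δ (N-1) * Gn (N-1)) := by
  rw [blk_prodM, sum_one _ (idx N (N-1))]
  · rw [blk_cml_diag Gs Gn GN0 (by omega),
      blk_cml_gn Gs Gn GN0 (by omega) (by omega) (by omega),
      idx_val (by omega : N - 1 ≤ N)]
    simp
  · intro k hk
    have e1 : (k : ℕ) ≠ N - 1 := ne_idx (by omega) hk
    rw [blk_cml_zero Gs Gn GN0 (by omega) e1 (by omega) (by omega) (by omega)]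
    simp

lemma blkP_0N :
    blk (prodM N d Gs Gn GN0 Δ) (idx N 0) (idx N N)
      = (Gs 1)ᵀ * Δ 1 * Gn 1 - GN0ᵀ * Δ N := by
  rw [blk_prodM, sum_three _ (idx N 0) (idx N 1) (idx N N)
    (idx_ne (by omega) (by omega) (by omega)) (idx_ne (by omega) (by omega) (by omega))
    (idx_ne (by omega) (by omega) (by omega))]
  · have t1 : blk (cmlMat N d Gs Gn GN0) (idx N 0) (idx N N) = 0 := by
      have : ((idx N 0 : Fin (N+1)) : ℕ) = 0 := idx_val (by omega)
      refine blk_cml_zero Gs Gn GN0 le_rfl (by omega) (by omega) (by omega) (by omega)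
    rw [t1, show (idx N 1 : Fin (N+1)) = idx N (0+1) from rfl, blk_cml_sub Gs Gn GN0 (by omega),
      blk_cml_gn Gs Gn GN0 (by omega) (by omega) (by omega),
      blk_cml_n0 Gs Gn GN0 (by omega), blk_cml_diag Gs Gn GN0 le_rfl,
      idx_val (by omega : 1 ≤ N), idx_val (le_refl N)]
    simp [sub_eq_add_neg]
  · intro k hk1 hk2 hk3
    have e1 : (k : ℕ) ≠ 0 := ne_idx (by omega) hk1
    have e2 : (k : ℕ) ≠ 1 := ne_idx (by omega) hk2
    have e3 : (k : ℕ) ≠ N := ne_idx (by omega) hk3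
    rw [blk_cml_zero Gs Gn GN0 (by omega) e1 (by omega) (by omega) (by omega)]
    simp

lemma blkP_0far {j : ℕ} (h1 : 2 ≤ j) (h2 : j ≤ N - 1) :
    blk (prodM N d Gs Gn GN0 Δ) (idx N 0) (idx N j) = 0 := by
  rw [blk_prodM]
  refine Finset.sum_eq_zero fun k _ => ?_
  by_cases hkN : (k : ℕ) = N
  · rw [blk_cml_zero Gs Gn GN0 (k := k) (iv := j) (by omega) (by omega) (by omega)
      (by omega) (by omega)]
    simp
  · by_cases hk01 : (k : ℕ) = 0 ∨ (k : ℕ) = 1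
    · rw [blk_cml_zero Gs Gn GN0 (k := k) (iv := j) (by omega) (by omega) (by omega)
        (by omega) (by omega)]
      simp
    · rw [blk_cml_zero Gs Gn GN0 (k := k) (iv := 0) (by omega) (by omega) (by omega)
        (by omega) (by omega)]
      simp

lemma blkP_far {i j : ℕ} (h1 : 1 ≤ i) (h2 : i + 1 < j) (h3 : j ≤ N - 1) :
    blk (prodM N d Gs Gn GN0 Δ) (idx N i) (idx N j) = 0 := by
  rw [blk_prodM]
  refine Finset.sum_eq_zero fun k _ => ?_
  by_cases hk : (k : ℕ) = j ∨ (k : ℕ) = j + 1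
  · rw [blk_cml_zero Gs Gn GN0 (k := k) (iv := i) (by omega) (by omega) (by omega)
      (by omega) (by omega)]
    simp
  · rw [blk_cml_zero Gs Gn GN0 (k := k) (iv := j) (by omega) (by omega) (by omega)
      (by omega) (by omega)]
    simp

end BlockValues


lemma bdiag_transpose_eq (hs : ∀ k ≤ N, (Δ k)ᵀ = Δ k) :
    (bdiag N d Δ)ᵀ = bdiag N d Δ := by
  funext p q
  simp only [Matrix.transpose_apply, bdiag]
  by_cases h : (q.1 : ℕ) = (p.1 : ℕ)
  · rw [if_pos h, if_pos h.symm]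
    have hp : ((p.1 : Fin (N+1)) : ℕ) ≤ N := Nat.lt_succ_iff.mp p.1.isLt
    have := hs (p.1 : ℕ) hp
    calc Δ (q.1 : ℕ) q.2 p.2 = Δ (p.1 : ℕ) q.2 p.2 := by rw [h]
      _ = (Δ (p.1 : ℕ))ᵀ p.2 q.2 := rfl
      _ = Δ (p.1 : ℕ) p.2 q.2 := by rw [this]
  · rw [if_neg h, if_neg (fun hh => h hh.symm)]

lemma prodM_transpose (hs : ∀ k ≤ N, (Δ k)ᵀ = Δ k) :
    (prodM N d Gs Gn GN0 Δ)ᵀ = prodM N d Gs Gn GN0 Δ := by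
  unfold prodM
  rw [Matrix.transpose_mul, Matrix.transpose_mul, Matrix.transpose_transpose,
    bdiag_transpose_eq Δ hs, ← Matrix.mul_assoc]

section PDHelpers

variable {M H : SqMat d}

lemma t_pd (h : M.PosDef) : Mᵀ = M := by
  have := h.isHermitian
  rwa [Matrix.IsHermitian, Matrix.conjTranspose_eq_transpose_of_trivial] at this

lemma det_pd (h : M.PosDef) : IsUnit M.det := (Matrix.isUnit_iff_isUnit_det _).mp h.isUnit

lemma pd_mul_inv_cancel (h : M.PosDef) (X : SqMat d) : M * (M⁻¹ * X) = X := by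
  rw [← Matrix.mul_assoc, Matrix.mul_nonsing_inv _ (det_pd h), Matrix.one_mul]

lemma pd_inv_mul_cancel (h : M.PosDef) (X : SqMat d) : M⁻¹ * (M * X) = X := by
  rw [← Matrix.mul_assoc, Matrix.nonsing_inv_mul _ (det_pd h), Matrix.one_mul]

lemma pd_inv_transpose (h : M.PosDef) : (M⁻¹)ᵀ = M⁻¹ := by
  rw [Matrix.transpose_nonsing_inv, t_pd h]

lemma pd_inv_inv (h : M.PosDef) : M⁻¹⁻¹ = M := Matrix.nonsing_inv_nonsing_inv _ (det_pd h)

lemma conj_neg_inv (h : H.PosDef) (X : SqMat d) :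
    (-(H⁻¹ * X))ᵀ * H * (-(H⁻¹ * X)) = Xᵀ * H⁻¹ * X := by
  have h1 : (-(H⁻¹ * X))ᵀ = -(Xᵀ * H⁻¹) := by
    rw [Matrix.transpose_neg, Matrix.transpose_mul, pd_inv_transpose h]
  rw [h1, neg_mul, neg_mul, mul_neg, neg_neg, Matrix.mul_assoc (Xᵀ * H⁻¹) H,
    pd_mul_inv_cancel h]

lemma mul_neg_inv (h : H.PosDef) (X Y : SqMat d) :
    Y * (-(H⁻¹ * X))ᵀ * H = -(Y * (Xᵀ * H⁻¹)) * H := by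
  rw [Matrix.transpose_neg, Matrix.transpose_mul, pd_inv_transpose h, mul_neg, neg_mul]

lemma cancel_inv_right {X Y C : SqMat d} (hC : C.PosDef) (h : X * C⁻¹ = Y * C⁻¹) :
    X = Y := by
  have h2 := congrArg (fun Z => Z * C) h
  simp only [Matrix.mul_assoc, Matrix.nonsing_inv_mul _ (det_pd hC), Matrix.mul_one] at h2
  exact h2

lemma cancel_inv_left {X Y C : SqMat d} (hC : C.PosDef) (h : C⁻¹ * X = C⁻¹ * Y) :
    X = Y := by
  have h2 := congrArg (fun Z => C * Z) h
  simp only [pd_mul_inv_cancel hC] at h2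
  exact h2

lemma t_inj {X Y : SqMat d} (h : Xᵀ = Yᵀ) : X = Y := by
  rw [← Matrix.transpose_transpose X, h, Matrix.transpose_transpose]

end PDHelpers

section ConjHelpers

lemma conj_swap {X : BigMat N d} (hX : Xᵀ = X) (F G : Vc N d) :
    Fᵀ * X * G = (Gᵀ * X * F)ᵀ := by
  calc Fᵀ * X * G = Fᵀ * (Xᵀ * G) := by rw [hX, Matrix.mul_assoc]
    _ = Fᵀ * (Gᵀ * X)ᵀ := by rw [Matrix.transpose_mul, Matrix.transpose_transpose]
    _ = (Gᵀ * X * F)ᵀ := by rw [Matrix.transpose_mul (Gᵀ * X) F]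

lemma conj_expand2 (F G F' G' : Vc N d) (X : BigMat N d) :
    (F + G)ᵀ * X * (F' + G')
      = Fᵀ * X * F' + Fᵀ * X * G' + Gᵀ * X * F' + Gᵀ * X * G' := by
  rw [Matrix.transpose_add, Matrix.add_mul, Matrix.add_mul, Matrix.mul_add, Matrix.mul_add]
  abel

lemma conj_expand (F G : Vc N d) (X : BigMat N d) :
    (F + G)ᵀ * X * (F + G)
      = Fᵀ * X * F + Fᵀ * X * G + Gᵀ * X * F + Gᵀ * X * G :=
  conj_expand2 F G F G X

lemma scale_left (P : Vc N d) (S : SqMat d) (X : BigMat N d) (W : Vc N d) :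
    (P * S)ᵀ * X * W = Sᵀ * (Pᵀ * X * W) := by
  rw [Matrix.transpose_mul, Matrix.mul_assoc Sᵀ Pᵀ X, Matrix.mul_assoc Sᵀ (Pᵀ * X) W]

lemma scale_right (F : Vc N d) (X : BigMat N d) (P : Vc N d) (S : SqMat d) :
    Fᵀ * X * (P * S) = (Fᵀ * X * P) * S :=
  (Matrix.mul_assoc (Fᵀ * X) P S).symm

end ConjHelpers

end CMLaux

/-- downward recursion for the middle diagonal blocks: `HmRec m = H (N-1-m)`. -/
noncomputable def HmRec (d N : ℕ) (Ja Jb : ℕ → SqMat d) : ℕ → SqMat d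
  | 0 => Ja (N-1)
  | (m+1) => Ja (N-2-m) - Jb (N-2-m) * (HmRec d N Ja Jb m)⁻¹ * (Jb (N-2-m))ᵀ

/-- downward recursion for the last-column blocks: `GnRec m = G_{N-1-m,N}`. -/
noncomputable def GnRec (d N : ℕ) (Ja Jb Jd : ℕ → SqMat d) : ℕ → SqMat d
  | 0 => -((HmRec d N Ja Jb 0)⁻¹ * Jd (N-1))
  | (m+1) => -((HmRec d N Ja Jb (m+1))⁻¹ * (Jb (N-2-m) * GnRec d N Ja Jb Jd m + Jd (N-2-m)))


open CMLaux

noncomputable def Ja {N d : ℕ} (J : BigMat N d) (k : ℕ) : SqMat d :=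
  blk J (idx N k) (idx N k)
noncomputable def Jb {N d : ℕ} (J : BigMat N d) (k : ℕ) : SqMat d :=
  blk J (idx N k) (idx N (k+1))
noncomputable def Jd {N d : ℕ} (J : BigMat N d) (k : ℕ) : SqMat d :=
  blk J (idx N k) (idx N N)
noncomputable def Hh {N d : ℕ} (J : BigMat N d) (k : ℕ) : SqMat d :=
  HmRec d N (Ja J) (Jb J) (N-1-k)
noncomputable def Gsf {N d : ℕ} (J : BigMat N d) (k : ℕ) : SqMat d :=
  -((Hh J k)⁻¹ * (Jb J (k-1))ᵀ)
noncomputable def Gnf {N d : ℕ} (J : BigMat N d) (k : ℕ) : SqMat d :=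
  GnRec d N (Ja J) (Jb J) (Jd J) (N-1-k)
noncomputable def HNf {N d : ℕ} (J : BigMat N d) : SqMat d :=
  Ja J N - ∑ k ∈ Finset.Icc 1 (N-1), (Gnf J k)ᵀ * Hh J k * Gnf J k
noncomputable def GN0f {N d : ℕ} (J : BigMat N d) : SqMat d :=
  -((HNf J)⁻¹ * (Jb J 0 * Gnf J 1 + Jd J 0)ᵀ)
noncomputable def H0f {N d : ℕ} (J : BigMat N d) : SqMat d :=
  Ja J 0 - (Gsf J 1)ᵀ * Hh J 1 * Gsf J 1 - (GN0f J)ᵀ * HNf J * GN0f J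
noncomputable def Gcf {N d : ℕ} (J : BigMat N d) (k : ℕ) : SqMat d :=
  if k = 0 then (H0f J)⁻¹ else if k = N then (HNf J)⁻¹ else (Hh J k)⁻¹

lemma main_ind {N d : ℕ} (hN : 2 ≤ N) (J : BigMat N d) (hJ : J.PosDef)
    (hsymm : J.IsSymm)
    (hshape : ∀ i j : Fin (N+1),
      (((i : ℕ) + 1 < (j : ℕ) ∧ (j : ℕ) ≠ N) ∨ ((j : ℕ) + 1 < (i : ℕ) ∧ (i : ℕ) ≠ N)) →
      blk J i j = 0) :
    ∀ m, m ≤ N - 2 →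
      (HmRec d N (Ja J) (Jb J) m).PosDef ∧
      ∃ P Q : Vc N d,
        colM P (idx N (N-1-m)) = 1 ∧
        (∀ j : Fin (N+1), ((j : ℕ) < N-1-m ∨ (j : ℕ) = N) → colM P j = 0) ∧
        colM Q (idx N N) = 1 ∧
        (∀ j : Fin (N+1), (j : ℕ) ≤ N-1-m → colM Q j = 0) ∧
        Pᵀ * J * P = HmRec d N (Ja J) (Jb J) m ∧
        Pᵀ * J * Q = -(HmRec d N (Ja J) (Jb J) m * GnRec d N (Ja J) (Jb J) (Jd J) m) ∧
        Qᵀ * J * Q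
          = Ja J N - ∑ t ∈ Finset.Icc (N-m) (N-1), (Gnf J t)ᵀ * Hh J t * Gnf J t := by
  have hJt : Jᵀ = J := hsymm
  intro m
  induction m with
  | zero =>
    intro _
    have hpd : (HmRec d N (Ja J) (Jb J) 0).PosDef := by
      simp only [HmRec]
      exact blk_posDef hJ _
    refine ⟨hpd, emb N d (idx N (N-1)), emb N d (idx N N), ?_, ?_, ?_, ?_, ?_, ?_, ?_⟩
    · rw [Nat.sub_zero, colM_emb, if_pos rfl]
    · intro j hj
      rw [Nat.sub_zero] at hj
      rw [colM_emb, if_neg]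
      intro he
      rw [he, idx_val (show N-1 ≤ N by omega)] at hj
      omega
    · rw [colM_emb, if_pos rfl]
    · intro j hj
      rw [Nat.sub_zero] at hj
      rw [colM_emb, if_neg]
      intro he
      rw [he, idx_val le_rfl] at hj
      omega
    · rw [embT_mul_emb]
      simp only [HmRec]
      rfl
    · rw [embT_mul_emb]
      simp only [HmRec, GnRec]
      rw [mul_neg, pd_mul_inv_cancel (by simpa only [HmRec] using hpd), neg_neg]
      rfl
    · rw [embT_mul_emb, Nat.sub_zero, Finset.Icc_eq_empty (by omega), Finset.sum_empty,
        sub_zero]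
      rfl
  | succ m ih =>
    intro hm1
    obtain ⟨hpd, P, Q, hP1, hP0, hQ1, hQ0, hPP, hPQ, hQQ⟩ := ih (by omega)
    set Hm := HmRec d N (Ja J) (Jb J) m with hHm
    set Gv := GnRec d N (Ja J) (Jb J) (Jd J) m with hGv
    set Gsv : SqMat d := -(Hm⁻¹ * (Jb J (N-2-m))ᵀ) with hGsv
    set P' : Vc N d := emb N d (idx N (N-2-m)) + P * Gsv with hP'
    set Q' : Vc N d := Q + P * Gv with hQ'
    have hkm : N - 1 - (m+1) = N - 2 - m := by omega
    have eP : (emb N d (idx N (N-2-m)))ᵀ * J * P = Jb J (N-2-m) := by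
      rw [embT_mul_big, sum_one _ (idx N (N-1-m))]
      · rw [hP1, Matrix.mul_one]
        rw [show N-1-m = N-2-m+1 by omega]
        rfl
      · intro t ht
        by_cases hcase : (t : ℕ) < N-1-m ∨ (t : ℕ) = N
        · rw [hP0 t hcase, Matrix.mul_zero]
        · push_neg at hcase
          have hne := ne_idx (show N-1-m ≤ N by omega) ht
          have hzero : blk J (idx N (N-2-m)) t = 0 := by
            apply hshape
            left
            exact ⟨by rw [idx_val (show N-2-m ≤ N by omega)]; omega, hcase.2⟩
          rw [hzero, Matrix.zero_mul]
    have eQ : (emb N d (idx N (N-2-m)))ᵀ * J * Q = Jd J (N-2-m) := by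
      rw [embT_mul_big, sum_one _ (idx N N)]
      · rw [hQ1, Matrix.mul_one]
        rfl
      · intro t ht
        by_cases hcase : (t : ℕ) ≤ N-1-m
        · rw [hQ0 t hcase, Matrix.mul_zero]
        · have hne := ne_idx le_rfl ht
          have hzero : blk J (idx N (N-2-m)) t = 0 := by
            apply hshape
            left
            exact ⟨by rw [idx_val (show N-2-m ≤ N by omega)]; omega, hne⟩
          rw [hzero, Matrix.zero_mul]
    have ePt : Pᵀ * J * (emb N d (idx N (N-2-m))) = (Jb J (N-2-m))ᵀ := by
      rw [conj_swap hJt, eP]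
    have eEE : (emb N d (idx N (N-2-m)))ᵀ * J * (emb N d (idx N (N-2-m)))
        = Ja J (N-2-m) := by
      rw [embT_mul_emb]; rfl
    have hGsvT : Gsvᵀ = -(Jb J (N-2-m) * Hm⁻¹) := by
      rw [hGsv, Matrix.transpose_neg, Matrix.transpose_mul, Matrix.transpose_transpose,
        pd_inv_transpose hpd]
    have hP'JP' : P'ᵀ * J * P' = HmRec d N (Ja J) (Jb J) (m+1) := by
      rw [hP', conj_expand, eEE, scale_right, eP, scale_left, ePt, scale_left,
        scale_right, hPP]
      simp only [HmRec]
      rw [← Matrix.mul_assoc Gsvᵀ Hm Gsv, conj_neg_inv hpd, hGsvT]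
      rw [hGsv]
      simp only [Matrix.transpose_neg, Matrix.transpose_mul, Matrix.transpose_transpose,
        mul_neg, neg_mul, Matrix.mul_assoc]
      abel
    have hcol1 : colM P' (idx N (N-2-m)) = 1 := by
      rw [hP', colM_add, colM_mulr,
        hP0 (idx N (N-2-m)) (Or.inl (by rw [idx_val (show N-2-m ≤ N by omega)]; omega)),
        Matrix.zero_mul, add_zero, colM_emb, if_pos rfl]
    have hpd' : (HmRec d N (Ja J) (Jb J) (m+1)).PosDef := by
      rw [← hP'JP']
      exact posdef_congr hJ P' (mulVec_inj_of_colM_one P' _ hcol1)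
    have hP'JQ' : P'ᵀ * J * Q'
        = -(HmRec d N (Ja J) (Jb J) (m+1) * GnRec d N (Ja J) (Jb J) (Jd J) (m+1)) := by
      rw [hP', hQ', conj_expand2, eQ, scale_right, eP, scale_left, hPQ, scale_left,
        scale_right, hPP]
      conv_rhs => simp only [GnRec]
      rw [mul_neg, mul_neg, neg_neg, pd_mul_inv_cancel hpd', ← hGv]
      abel
    have hQ'JQ' : Q'ᵀ * J * Q'
        = Ja J N - ∑ t ∈ Finset.Icc (N-(m+1)) (N-1), (Gnf J t)ᵀ * Hh J t * Gnf J t := by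
      have hQP : Qᵀ * J * P = -(Gvᵀ * Hm) := by
        rw [conj_swap hJt, hPQ, Matrix.transpose_neg, Matrix.transpose_mul, t_pd hpd]
      have hsplit : Finset.Icc (N-(m+1)) (N-1) = insert (N-(m+1)) (Finset.Icc (N-m) (N-1)) := by
        ext x
        simp only [Finset.mem_insert, Finset.mem_Icc]
        omega
      have hGnfv : Gnf J (N-(m+1)) = Gv := by
        unfold Gnf
        rw [show N-1-(N-(m+1)) = m from by omega, hGv]
      have hHhv : Hh J (N-(m+1)) = Hm := by
        unfold Hh
        rw [show N-1-(N-(m+1)) = m from by omega, hHm]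
      rw [hQ', conj_expand, hQQ, scale_right, hQP, scale_left, hPQ, scale_left,
        scale_right, hPP, hsplit, Finset.sum_insert (by simp only [Finset.mem_Icc]; omega),
        hGnfv, hHhv]
      simp only [mul_neg, neg_mul, Matrix.mul_assoc]
      abel
    refine ⟨hpd', P', Q', ?_, ?_, ?_, ?_, hP'JP', hP'JQ', hQ'JQ'⟩
    · rw [hkm]; exact hcol1
    · intro j hj
      rw [hkm] at hj
      rw [hP', colM_add, colM_mulr, colM_emb, if_neg, hP0 j, Matrix.zero_mul, add_zero]
      · omega
      · intro he
        have : (j : ℕ) = N-2-m := by rw [he, idx_val (show N-2-m ≤ N by omega)]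
        omega
    · rw [hQ', colM_add, colM_mulr, hQ1,
        hP0 (idx N N) (Or.inr (idx_val le_rfl)), Matrix.zero_mul, add_zero]
    · intro j hj
      rw [hkm] at hj
      rw [hQ', colM_add, colM_mulr, hQ0 j (by omega), hP0 j (Or.inl (by omega)),
        Matrix.zero_mul, add_zero]

lemma pd_all {N d : ℕ} (hN : 2 ≤ N) (J : BigMat N d) (hJ : J.PosDef)
    (hsymm : J.IsSymm)
    (hshape : ∀ i j : Fin (N+1),
      (((i : ℕ) + 1 < (j : ℕ) ∧ (j : ℕ) ≠ N) ∨ ((j : ℕ) + 1 < (i : ℕ) ∧ (i : ℕ) ≠ N)) →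
      blk J i j = 0) :
    (∀ k, 1 ≤ k → k ≤ N-1 → (Hh J k).PosDef) ∧ (HNf J).PosDef ∧ (H0f J).PosDef := by
  have hJt : Jᵀ = J := hsymm
  have hMid : ∀ k, 1 ≤ k → k ≤ N-1 → (Hh J k).PosDef := by
    intro k h1 h2
    exact (main_ind hN J hJ hsymm hshape (N-1-k) (by omega)).1
  obtain ⟨P1, Q1, hP11, hP10, hQ11, hQ10, hPP1, hPQ1, hQQ1⟩ :=
    (main_ind hN J hJ hsymm hshape (N-2) (by omega)).2
  have e1 : N-1-(N-2) = 1 := by omega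
  rw [e1] at hP11 hP10 hQ10
  have hH1 : HmRec d N (Ja J) (Jb J) (N-2) = Hh J 1 := by
    unfold Hh; rw [show N-1-1 = N-2 from by omega]
  have hGn1 : GnRec d N (Ja J) (Jb J) (Jd J) (N-2) = Gnf J 1 := by
    unfold Gnf; rw [show N-1-1 = N-2 from by omega]
  rw [hH1] at hPP1
  rw [hH1, hGn1] at hPQ1
  have e2 : N-(N-2) = 2 := by omega
  rw [e2] at hQQ1
  have hpd1 : (Hh J 1).PosDef := hMid 1 (by omega) (by omega)
  set QF : Vc N d := Q1 + P1 * Gnf J 1 with hQF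
  have hQFcolN : colM QF (idx N N) = 1 := by
    rw [hQF, colM_add, colM_mulr, hQ11, hP10 (idx N N) (Or.inr (idx_val le_rfl)),
      Matrix.zero_mul, add_zero]
  have hQFcol0 : colM QF (idx N 0) = 0 := by
    rw [hQF, colM_add, colM_mulr, hQ10 _ (by rw [idx_val (by omega)]; omega),
      hP10 _ (Or.inl (by rw [idx_val (by omega)]; omega)), Matrix.zero_mul, add_zero]
  have hQFcol1 : colM QF (idx N 1) = Gnf J 1 := by
    rw [hQF, colM_add, colM_mulr, hQ10 _ (by rw [idx_val (by omega)]),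
      hP11, Matrix.one_mul, zero_add]
  have hQP1 : Q1ᵀ * J * P1 = -((Gnf J 1)ᵀ * Hh J 1) := by
    rw [conj_swap hJt, hPQ1, Matrix.transpose_neg, Matrix.transpose_mul, t_pd hpd1]
  have hQQF : QFᵀ * J * QF = HNf J := by
    rw [hQF, conj_expand, hQQ1, scale_right, hQP1, scale_left, hPQ1, scale_left,
      scale_right, hPP1]
    unfold HNf
    have hsplit : Finset.Icc 1 (N-1) = insert 1 (Finset.Icc 2 (N-1)) := by
      ext x; simp only [Finset.mem_insert, Finset.mem_Icc]; omega
    rw [hsplit, Finset.sum_insert (by simp only [Finset.mem_Icc]; omega)]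
    simp only [neg_mul, mul_neg, Matrix.mul_assoc]
    abel
  have hpdHN : (HNf J).PosDef := by
    rw [← hQQF]; exact posdef_congr hJ QF (mulVec_inj_of_colM_one QF _ hQFcolN)
  have e0P1 : (emb N d (idx N 0))ᵀ * J * P1 = Jb J 0 := by
    rw [embT_mul_big, sum_one _ (idx N 1)]
    · rw [hP11, Matrix.mul_one]; rfl
    · intro t ht
      by_cases hcase : (t : ℕ) < 1 ∨ (t : ℕ) = N
      · rw [hP10 t hcase, Matrix.mul_zero]
      · push_neg at hcase
        have hne := ne_idx (show (1:ℕ) ≤ N by omega) ht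
        have hzero : blk J (idx N 0) t = 0 := by
          apply hshape; left
          exact ⟨by rw [idx_val (by omega)]; omega, hcase.2⟩
        rw [hzero, Matrix.zero_mul]
  have e0QF : (emb N d (idx N 0))ᵀ * J * QF = Jb J 0 * Gnf J 1 + Jd J 0 := by
    rw [embT_mul_big, sum_two _ (idx N 1) (idx N N) (idx_ne (by omega) le_rfl (by omega))]
    · rw [hQFcol1, hQFcolN, Matrix.mul_one]; rfl
    · intro t ht1 htN
      have hneN := ne_idx le_rfl htN
      by_cases h0 : (t : ℕ) = 0
      · have ht0 : t = idx N 0 := Fin.ext (by rw [idx_val (by omega)]; exact h0)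
        rw [ht0, hQFcol0, Matrix.mul_zero]
      · have hne1 := ne_idx (show (1:ℕ) ≤ N by omega) ht1
        have hzero : blk J (idx N 0) t = 0 := by
          apply hshape; left
          exact ⟨by rw [idx_val (by omega)]; omega, hneN⟩
        rw [hzero, Matrix.zero_mul]
  have hP1QF : P1ᵀ * J * QF = 0 := by
    rw [hQF, Matrix.mul_add, scale_right, hPP1]
    have : P1ᵀ * J * Q1 = -(Hh J 1 * Gnf J 1) := hPQ1
    rw [this]
    abel
  set K := Jb J 0 * Gnf J 1 + Jd J 0 with hK
  set F0 : Vc N d := emb N d (idx N 0) + P1 * Gsf J 1 + QF * GN0f J with hF0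
  have hGs1 : Gsf J 1 = -((Hh J 1)⁻¹ * (Jb J 0)ᵀ) := rfl
  have hGN0K : GN0f J = -((HNf J)⁻¹ * Kᵀ) := by rw [hK]; rfl
  have hEQF : (emb N d (idx N 0) + P1 * Gsf J 1)ᵀ * J * QF = K := by
    rw [Matrix.transpose_add, Matrix.add_mul, Matrix.add_mul, e0QF, scale_left, hP1QF]
    simp
  have eP1e : P1ᵀ * J * emb N d (idx N 0) = (Jb J 0)ᵀ := by
    rw [conj_swap hJt, e0P1]
  have hJa0 : blk J (idx N 0) (idx N 0) = Ja J 0 := rfl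
  have c1 : (emb N d (idx N 0) + P1 * Gsf J 1)ᵀ * J * (emb N d (idx N 0) + P1 * Gsf J 1)
      = Ja J 0 + Jb J 0 * Gsf J 1 + (Gsf J 1)ᵀ * (Jb J 0)ᵀ
        + (Gsf J 1)ᵀ * (Hh J 1 * Gsf J 1) := by
    rw [conj_expand2, embT_mul_emb, hJa0, scale_right, e0P1, scale_left, eP1e,
      scale_left, scale_right, hPP1]
  have c2 : (emb N d (idx N 0) + P1 * Gsf J 1)ᵀ * J * (QF * GN0f J) = K * GN0f J := by
    rw [scale_right, hEQF]
  have c3 : (QF * GN0f J)ᵀ * J * (emb N d (idx N 0) + P1 * Gsf J 1)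
      = (GN0f J)ᵀ * Kᵀ := by
    rw [scale_left, conj_swap hJt QF (emb N d (idx N 0) + P1 * Gsf J 1), hEQF]
  have c4 : (QF * GN0f J)ᵀ * J * (QF * GN0f J)
      = (GN0f J)ᵀ * (HNf J * GN0f J) := by
    rw [scale_left, scale_right, hQQF]
  have s1 : Jb J 0 * Gsf J 1 = -(Jb J 0 * ((Hh J 1)⁻¹ * (Jb J 0)ᵀ)) := by
    rw [hGs1, mul_neg]
  have s2 : (Gsf J 1)ᵀ * (Jb J 0)ᵀ = -(Jb J 0 * ((Hh J 1)⁻¹ * (Jb J 0)ᵀ)) := by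
    rw [hGs1, Matrix.transpose_neg, Matrix.transpose_mul, Matrix.transpose_transpose,
      pd_inv_transpose hpd1, neg_mul, Matrix.mul_assoc]
  have s3 : (Gsf J 1)ᵀ * (Hh J 1 * Gsf J 1)
      = Jb J 0 * ((Hh J 1)⁻¹ * (Jb J 0)ᵀ) := by
    rw [← Matrix.mul_assoc, hGs1, conj_neg_inv hpd1, Matrix.transpose_transpose,
      Matrix.mul_assoc]
  have s3' : (Gsf J 1)ᵀ * Hh J 1 * Gsf J 1 = Jb J 0 * ((Hh J 1)⁻¹ * (Jb J 0)ᵀ) := by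
    rw [hGs1, conj_neg_inv hpd1, Matrix.transpose_transpose, Matrix.mul_assoc]
  have s4 : K * GN0f J = -(K * ((HNf J)⁻¹ * Kᵀ)) := by
    rw [hGN0K, mul_neg]
  have s5 : (GN0f J)ᵀ * Kᵀ = -(K * ((HNf J)⁻¹ * Kᵀ)) := by
    rw [hGN0K, Matrix.transpose_neg, Matrix.transpose_mul, Matrix.transpose_transpose,
      pd_inv_transpose hpdHN, neg_mul, Matrix.mul_assoc]
  have s6 : (GN0f J)ᵀ * (HNf J * GN0f J) = K * ((HNf J)⁻¹ * Kᵀ) := by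
    rw [← Matrix.mul_assoc, hGN0K, conj_neg_inv hpdHN, Matrix.transpose_transpose,
      Matrix.mul_assoc]
  have s6' : (GN0f J)ᵀ * HNf J * GN0f J = K * ((HNf J)⁻¹ * Kᵀ) := by
    rw [hGN0K, conj_neg_inv hpdHN, Matrix.transpose_transpose, Matrix.mul_assoc]
  have hH0 : H0f J = Ja J 0 - Jb J 0 * ((Hh J 1)⁻¹ * (Jb J 0)ᵀ)
      - K * ((HNf J)⁻¹ * Kᵀ) := by
    unfold H0f
    rw [s3', s6']
  have hF0JF0 : F0ᵀ * J * F0 = H0f J := by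
    rw [hF0, conj_expand2, c1, c2, c3, c4, s1, s2, s3, s4, s5, s6, hH0]
    abel
  have hF0col : colM F0 (idx N 0) = 1 := by
    rw [hF0, colM_add, colM_add, colM_mulr, colM_mulr, colM_emb, if_pos rfl,
      hP10 _ (Or.inl (by rw [idx_val (by omega)]; omega)), hQFcol0, Matrix.zero_mul,
      Matrix.zero_mul, add_zero, add_zero]
  have hpdH0 : (H0f J).PosDef := by
    rw [← hF0JF0]
    exact posdef_congr hJ F0 (mulVec_inj_of_colM_one F0 _ hF0col)
  exact ⟨hMid, hpdHN, hpdH0⟩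

section Recursions

variable {N d : ℕ} (hN : 2 ≤ N) (J : BigMat N d)

lemma R1' : Hh J (N-1) = Ja J (N-1) := by
  unfold Hh; rw [show N-1-(N-1) = 0 from by omega]; simp only [HmRec]

lemma R1 {k : ℕ} (h1 : 1 ≤ k) (h2 : k ≤ N-2) :
    Hh J k = Ja J k - Jb J k * (Hh J (k+1))⁻¹ * (Jb J k)ᵀ := by
  unfold Hh
  rw [show N-1-k = (N-2-k)+1 from by omega]
  simp only [HmRec]
  rw [show N-2-(N-2-k) = k from by omega, show N-1-(k+1) = N-2-k from by omega]

lemma R2' : Gnf J (N-1) = -((Hh J (N-1))⁻¹ * Jd J (N-1)) := by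
  unfold Gnf Hh; rw [show N-1-(N-1) = 0 from by omega]; simp only [GnRec]

lemma R2 {k : ℕ} (h1 : 1 ≤ k) (h2 : k ≤ N-2) :
    Gnf J k = -((Hh J k)⁻¹ * (Jb J k * Gnf J (k+1) + Jd J k)) := by
  unfold Gnf Hh
  rw [show N-1-k = (N-2-k)+1 from by omega]
  simp only [GnRec]
  rw [show N-2-(N-2-k) = k from by omega, show N-1-(k+1) = N-2-k from by omega]

lemma S5' {k : ℕ} (hpd : (Hh J k).PosDef) :
    (Gsf J k)ᵀ * Hh J k = -(Jb J (k-1)) := by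
  rw [show Gsf J k = -((Hh J k)⁻¹ * (Jb J (k-1))ᵀ) from rfl, Matrix.transpose_neg,
    Matrix.transpose_mul, Matrix.transpose_transpose, pd_inv_transpose hpd, neg_mul,
    Matrix.mul_assoc, Matrix.nonsing_inv_mul _ (det_pd hpd), Matrix.mul_one]

lemma S3 {k : ℕ} (hpd : (Hh J k).PosDef) :
    (Gsf J k)ᵀ * Hh J k * Gsf J k = Jb J (k-1) * ((Hh J k)⁻¹ * (Jb J (k-1))ᵀ) := by
  rw [show Gsf J k = -((Hh J k)⁻¹ * (Jb J (k-1))ᵀ) from rfl, conj_neg_inv hpd,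
    Matrix.transpose_transpose, Matrix.mul_assoc]

lemma S8 (hpdHN : (HNf J).PosDef) :
    (GN0f J)ᵀ * HNf J = -(Jb J 0 * Gnf J 1 + Jd J 0) := by
  rw [show GN0f J = -((HNf J)⁻¹ * (Jb J 0 * Gnf J 1 + Jd J 0)ᵀ) from rfl,
    Matrix.transpose_neg, Matrix.transpose_mul, Matrix.transpose_transpose,
    pd_inv_transpose hpdHN, neg_mul, Matrix.mul_assoc,
    Matrix.nonsing_inv_mul _ (det_pd hpdHN), Matrix.mul_one]

end Recursions

lemma cml_exists_eq {N d : ℕ} (hN : 2 ≤ N) (J : BigMat N d) (hJ : J.PosDef)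
    (hsymm : J.IsSymm)
    (hshape : ∀ i j : Fin (N+1),
      (((i : ℕ) + 1 < (j : ℕ) ∧ (j : ℕ) ≠ N) ∨ ((j : ℕ) + 1 < (i : ℕ) ∧ (i : ℕ) ≠ N)) →
      blk J i j = 0) :
    J = prodM N d (Gsf J) (Gnf J) (GN0f J) (fun t => (Gcf J t)⁻¹) := by
  obtain ⟨hMid, hpdHN, hpdH0⟩ := pd_all hN J hJ hsymm hshape
  have hJt : Jᵀ = J := hsymm
  have hGcPD : ∀ k ≤ N, (Gcf J k).PosDef := by
    intro k hk
    unfold Gcf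
    split_ifs with h0 hn
    · exact hpdH0.inv
    · exact hpdHN.inv
    · exact (hMid k (by omega) (by omega)).inv
  have hΔ0 : (Gcf J 0)⁻¹ = H0f J := by
    unfold Gcf; rw [if_pos rfl, pd_inv_inv hpdH0]
  have hΔN : (Gcf J N)⁻¹ = HNf J := by
    unfold Gcf; rw [if_neg (by omega), if_pos rfl, pd_inv_inv hpdHN]
  have hΔmid : ∀ t, 1 ≤ t → t ≤ N-1 → (Gcf J t)⁻¹ = Hh J t := by
    intro t h1 h2
    unfold Gcf
    rw [if_neg (by omega), if_neg (by omega), pd_inv_inv (hMid t h1 h2)]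
  have hsymΔ : ∀ k ≤ N, ((Gcf J k)⁻¹)ᵀ = (Gcf J k)⁻¹ :=
    fun k hk => pd_inv_transpose (hGcPD k hk)
  have hPt : (prodM N d (Gsf J) (Gnf J) (GN0f J) (fun t => (Gcf J t)⁻¹))ᵀ
      = prodM N d (Gsf J) (Gnf J) (GN0f J) (fun t => (Gcf J t)⁻¹) :=
    prodM_transpose _ _ _ _ hsymΔ
  have key : ∀ i j : Fin (N+1), (i : ℕ) ≤ (j : ℕ) →
      blk J i j = blk (prodM N d (Gsf J) (Gnf J) (GN0f J) (fun t => (Gcf J t)⁻¹)) i j := by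
    intro i j hij
    have hiN : (i : ℕ) ≤ N := Nat.lt_succ_iff.mp i.isLt
    have hjN : (j : ℕ) ≤ N := Nat.lt_succ_iff.mp j.isLt
    rw [← idx_eq i, ← idx_eq j]
    by_cases hdiag : (i : ℕ) = (j : ℕ)
    · rw [hdiag]
      by_cases hj0 : (j : ℕ) = 0
      · rw [hj0, blkP_diag_0 _ _ _ _ hN, hΔ0, hΔmid 1 (by omega) (by omega), hΔN]
        show Ja J 0 = _
        unfold H0f
        abel
      · by_cases hjN' : (j : ℕ) = N
        · rw [hjN', blkP_diag_N _ _ _ _ hN, hΔN,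
            Finset.sum_congr rfl (fun t ht => by
              rw [hΔmid t (Finset.mem_Icc.mp ht).1 (Finset.mem_Icc.mp ht).2])]
          show Ja J N = _
          unfold HNf
          abel
        · by_cases hjN1 : (j : ℕ) = N-1
          · rw [hjN1, blkP_diag_last _ _ _ _ hN, hΔmid (N-1) (by omega) (by omega),
              R1' (J := J)]
            rfl
          · rw [blkP_diag_mid _ _ _ _ hN (by omega) (by omega : (j:ℕ) ≤ N-2),
              hΔmid (j:ℕ) (by omega) (by omega), hΔmid ((j:ℕ)+1) (by omega) (by omega),
              S3 J (hMid ((j:ℕ)+1) (by omega) (by omega)), R1 J (by omega) (by omega)]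
            simp only [Nat.add_sub_cancel, Matrix.mul_assoc]
            show Ja J (j:ℕ) = _
            abel
    · have hij' : (i : ℕ) < (j : ℕ) := by omega
      by_cases hjN' : (j : ℕ) = N
      · rw [hjN']
        by_cases hi0 : (i : ℕ) = 0
        · rw [hi0, blkP_0N _ _ _ _ hN, hΔmid 1 (by omega) (by omega), hΔN]
          rw [S5' J (hMid 1 (by omega) (by omega)), S8 J hpdHN]
          show Jd J 0 = _
          simp only [Nat.sub_self, neg_mul]
          abel
        · by_cases hiN1 : (i : ℕ) = N-1
          · rw [hiN1, blkP_lastN _ _ _ _ hN, hΔmid (N-1) (by omega) (by omega),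
              R2' (J := J), mul_neg, pd_mul_inv_cancel (hMid (N-1) (by omega) (by omega)),
              neg_neg]
            rfl
          · rw [blkP_midN _ _ _ _ hN (by omega) (by omega : (i:ℕ) ≤ N-2),
              hΔmid (i:ℕ) (by omega) (by omega), hΔmid ((i:ℕ)+1) (by omega) (by omega),
              S5' J (hMid ((i:ℕ)+1) (by omega) (by omega)),
              R2 J (by omega) (by omega : (i:ℕ) ≤ N-2), mul_neg,
              pd_mul_inv_cancel (hMid (i:ℕ) (by omega) (by omega)), neg_neg]
            show Jd J (i:ℕ) = _
            simp only [Nat.add_sub_cancel, neg_mul]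
            abel
      · by_cases hsup : (i : ℕ) + 1 = (j : ℕ)
        · rw [← hsup, blkP_super _ _ _ _ hN (by omega),
            hΔmid ((i:ℕ)+1) (by omega) (by omega),
            S5' J (hMid ((i:ℕ)+1) (by omega) (by omega))]
          simp only [Nat.add_sub_cancel, neg_neg]
          rfl
        · have hzJ : blk J (idx N (i:ℕ)) (idx N (j:ℕ)) = 0 := by
            apply hshape
            left
            exact ⟨by rw [idx_val hiN, idx_val hjN]; omega, by rw [idx_val hjN]; omega⟩
          rw [hzJ]
          by_cases hi0 : (i : ℕ) = 0
          · rw [hi0, blkP_0far _ _ _ _ hN (by omega) (by omega)]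
          · rw [blkP_far _ _ _ _ hN (by omega) (by omega) (by omega)]
  apply blk_ext
  intro i j
  rcases le_or_gt (i : ℕ) (j : ℕ) with h | h
  · exact key i j h
  · have h1 := key j i (le_of_lt h)
    have e1 : blk J i j = (blk J j i)ᵀ := by
      rw [← blk_transpose, hJt]
    have e2 : blk (prodM N d (Gsf J) (Gnf J) (GN0f J) (fun t => (Gcf J t)⁻¹)) i j
        = (blk (prodM N d (Gsf J) (Gnf J) (GN0f J) (fun t => (Gcf J t)⁻¹)) j i)ᵀ := by
      rw [← blk_transpose, hPt]
    rw [e1, e2, h1]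

/-- a symmetric positive definite matrix `J` in CM_L form (block
tridiagonal plus possibly nonzero blocks `D_k = blk J k N` in the last block
column/row) admits a unique factorization `J = (𝓖ᴸ)ᵀ (Gᴸ)⁻¹ 𝓖ᴸ` of a forward CM_L
model with `Gᴸ = diag(G₀,…,G_N)` positive definite, the parameters being determined by
the backward recursion `G_{N-1}⁻¹ = A_{N-1}`, `G_{k,k-1} = -G_k B_{k-1}ᵀ`,
`G_{k-1}⁻¹ = A_{k-1} - G_{k,k-1}ᵀ G_k⁻¹ G_{k,k-1}`,
`G_{k-1,N} = G_{k-1} G_{k,k-1}ᵀ G_k⁻¹ G_{k,N} - G_{k-1} D_{k-1}` (together with the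
boundary formulas for `G_N`, `G_{N,0}`, `G₀`). -/
theorem cml_factorization {N d : ℕ} (hN : 2 ≤ N) (J : BigMat N d) (hJ : J.PosDef)
    (hsymm : J.IsSymm)
    (hshape : ∀ i j : Fin (N+1),
      (((i : ℕ) + 1 < (j : ℕ) ∧ (j : ℕ) ≠ N) ∨ ((j : ℕ) + 1 < (i : ℕ) ∧ (i : ℕ) ≠ N)) →
      blk J i j = 0) :
    (∃ Gs Gn : ℕ → SqMat d, ∃ GN0 : SqMat d, ∃ Gc : ℕ → SqMat d,
      ((∀ k ≤ N, (Gc k).PosDef) ∧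
        J = (cmlMat N d Gs Gn GN0)ᵀ * bdiag N d (fun k => (Gc k)⁻¹) *
              cmlMat N d Gs Gn GN0) ∧
      ((Gc (N-1))⁻¹ = blk J ⟨N-1, by omega⟩ ⟨N-1, by omega⟩ ∧
       (∀ k, ∀ _ : 1 ≤ k, ∀ _ : k ≤ N - 1,
          Gs k = -(Gc k * (blk J ⟨k-1, by omega⟩ ⟨k, by omega⟩)ᵀ)) ∧
       (∀ k, ∀ _ : 1 ≤ k, ∀ _ : k ≤ N - 2,
          (Gc k)⁻¹ = blk J ⟨k, by omega⟩ ⟨k, by omega⟩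
            - (Gs (k+1))ᵀ * (Gc (k+1))⁻¹ * Gs (k+1)) ∧
       Gn (N-1) = -(Gc (N-1) * blk J ⟨N-1, by omega⟩ ⟨N, by omega⟩) ∧
       (∀ k, ∀ _ : 1 ≤ k, ∀ _ : k ≤ N - 2,
          Gn k = Gc k * ((Gs (k+1))ᵀ * (Gc (k+1))⁻¹ * Gn (k+1))
            - Gc k * blk J ⟨k, by omega⟩ ⟨N, by omega⟩) ∧
       (Gc N)⁻¹ = blk J ⟨N, by omega⟩ ⟨N, by omega⟩
         - ∑ k ∈ Finset.Icc 1 (N-1), (Gn k)ᵀ * (Gc k)⁻¹ * Gn k ∧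
       GN0 = Gc N * ((Gn 1)ᵀ * (Gc 1)⁻¹ * Gs 1)
         - Gc N * (blk J ⟨0, by omega⟩ ⟨N, by omega⟩)ᵀ ∧
       (Gc 0)⁻¹ = blk J ⟨0, by omega⟩ ⟨0, by omega⟩ - (Gs 1)ᵀ * (Gc 1)⁻¹ * Gs 1
         - GN0ᵀ * (Gc N)⁻¹ * GN0)) ∧
    (∀ (Gs₁ Gn₁ : ℕ → SqMat d) (GN0₁ : SqMat d) (Gc₁ : ℕ → SqMat d)
       (Gs₂ Gn₂ : ℕ → SqMat d) (GN0₂ : SqMat d) (Gc₂ : ℕ → SqMat d),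
      (∀ k ≤ N, (Gc₁ k).PosDef) → (∀ k ≤ N, (Gc₂ k).PosDef) →
      J = (cmlMat N d Gs₁ Gn₁ GN0₁)ᵀ * bdiag N d (fun k => (Gc₁ k)⁻¹) *
            cmlMat N d Gs₁ Gn₁ GN0₁ →
      J = (cmlMat N d Gs₂ Gn₂ GN0₂)ᵀ * bdiag N d (fun k => (Gc₂ k)⁻¹) *
            cmlMat N d Gs₂ Gn₂ GN0₂ →
      (∀ k ≤ N, Gc₁ k = Gc₂ k) ∧ (∀ k, 1 ≤ k → k ≤ N - 1 → Gs₁ k = Gs₂ k) ∧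
        (∀ k, 1 ≤ k → k ≤ N - 1 → Gn₁ k = Gn₂ k) ∧ GN0₁ = GN0₂) := by
  classical
  have hJt : Jᵀ = J := hsymm
  obtain ⟨hMid, hpdHN, hpdH0⟩ := pd_all hN J hJ hsymm hshape
  have hpd1 : (Hh J 1).PosDef := hMid 1 (by omega) (by omega)
  have hΔ0 : (Gcf J 0)⁻¹ = H0f J := by
    unfold Gcf; rw [if_pos rfl, pd_inv_inv hpdH0]
  have hΔN : (Gcf J N)⁻¹ = HNf J := by
    unfold Gcf; rw [if_neg (by omega), if_pos rfl, pd_inv_inv hpdHN]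
  have hΔmid : ∀ t, 1 ≤ t → t ≤ N-1 → (Gcf J t)⁻¹ = Hh J t := by
    intro t h1 h2
    unfold Gcf
    rw [if_neg (by omega), if_neg (by omega), pd_inv_inv (hMid t h1 h2)]
  have hGcPD : ∀ k ≤ N, (Gcf J k).PosDef := by
    intro k hk
    unfold Gcf
    split_ifs with h0 hn
    · exact hpdH0.inv
    · exact hpdHN.inv
    · exact (hMid k (by omega) (by omega)).inv
  have hmk : ∀ (v : ℕ) (h : v < N+1), (⟨v, h⟩ : Fin (N+1)) = idx N v :=
    fun v h => Fin.ext (idx_val (by omega)).symm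
  constructor
  · refine ⟨Gsf J, Gnf J, GN0f J, Gcf J, ⟨hGcPD, ?_⟩,
      ?_, ?_, ?_, ?_, ?_, ?_, ?_, ?_⟩
    · exact cml_exists_eq hN J hJ hsymm hshape
    · simp only [hmk]
      rw [hΔmid (N-1) (by omega) (by omega), R1' (J := J)]
      rfl
    · intro k hk1 hk2
      simp only [hmk]
      have hb : blk J (idx N (k-1)) (idx N k) = Jb J (k-1) := by
        unfold Jb; rw [show k-1+1 = k from by omega]
      rw [hb]
      unfold Gcf
      rw [if_neg (by omega), if_neg (by omega)]
      rfl
    · intro k hk1 hk2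
      simp only [hmk]
      rw [hΔmid k (by omega) (by omega), hΔmid (k+1) (by omega) (by omega),
        S3 J (hMid (k+1) (by omega) (by omega)), R1 J (by omega) (by omega)]
      simp only [Nat.add_sub_cancel, Matrix.mul_assoc]
      rfl
    · simp only [hmk]
      have hd : blk J (idx N (N-1)) (idx N N) = Jd J (N-1) := rfl
      rw [hd]
      unfold Gcf
      rw [if_neg (by omega), if_neg (by omega), R2' (J := J)]
    · intro k hk1 hk2
      simp only [hmk]
      have hd : blk J (idx N k) (idx N N) = Jd J k := rfl
      rw [hd, hΔmid (k+1) (by omega) (by omega),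
        S5' J (hMid (k+1) (by omega) (by omega))]
      simp only [Nat.add_sub_cancel, neg_mul]
      unfold Gcf
      rw [if_neg (by omega), if_neg (by omega), R2 J (by omega) (by omega),
        mul_neg, sub_eq_add_neg, ← neg_add, ← Matrix.mul_add]
    · simp only [hmk]
      rw [hΔN, Finset.sum_congr rfl (fun t ht => by
        rw [hΔmid t (Finset.mem_Icc.mp ht).1 (Finset.mem_Icc.mp ht).2])]
      rfl
    · simp only [hmk]
      rw [hΔmid 1 (by omega) (by omega)]
      have hHG : Hh J 1 * Gsf J 1 = -((Jb J 0)ᵀ) := by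
        rw [show Gsf J 1 = -((Hh J 1)⁻¹ * (Jb J 0)ᵀ) from rfl, mul_neg,
          pd_mul_inv_cancel hpd1]
      rw [Matrix.mul_assoc ((Gnf J 1)ᵀ) (Hh J 1) (Gsf J 1), hHG, mul_neg,
        ← Matrix.transpose_mul]
      have hd : blk J (idx N 0) (idx N N) = Jd J 0 := rfl
      rw [hd]
      unfold Gcf
      rw [if_neg (by omega), if_pos rfl, mul_neg, sub_eq_add_neg, ← neg_add,
        ← Matrix.mul_add, ← Matrix.transpose_add]
      rfl
    · simp only [hmk]
      rw [hΔ0, hΔmid 1 (by omega) (by omega), hΔN]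
      rfl
  · intro Gs₁ Gn₁ GN0₁ Gc₁ Gs₂ Gn₂ GN0₂ Gc₂ h1PD h2PD hf1 hf2
    have e1 : J = prodM N d Gs₁ Gn₁ GN0₁ (fun t => (Gc₁ t)⁻¹) := hf1
    have e2 : J = prodM N d Gs₂ Gn₂ GN0₂ (fun t => (Gc₂ t)⁻¹) := hf2
    have hblk : ∀ i j : Fin (N+1),
        blk (prodM N d Gs₁ Gn₁ GN0₁ (fun t => (Gc₁ t)⁻¹)) i j
          = blk (prodM N d Gs₂ Gn₂ GN0₂ (fun t => (Gc₂ t)⁻¹)) i j := by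
      intro i j; rw [← e1, ← e2]
    have hGcOf : ∀ k, k ≤ N → (Gc₁ k)⁻¹ = (Gc₂ k)⁻¹ → Gc₁ k = Gc₂ k := by
      intro k hk h
      rw [← pd_inv_inv (h1PD k hk), h, pd_inv_inv (h2PD k hk)]
    have main : ∀ m, m ≤ N-2 →
        Gc₁ (N-1-m) = Gc₂ (N-1-m) ∧ Gs₁ (N-1-m) = Gs₂ (N-1-m) := by
      intro m
      induction m with
      | zero =>
        intro _
        have hD : (Gc₁ (N-1))⁻¹ = (Gc₂ (N-1))⁻¹ := by
          have h := hblk (idx N (N-1)) (idx N (N-1))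
          rwa [blkP_diag_last _ _ _ _ hN, blkP_diag_last _ _ _ _ hN] at h
        have hGc := hGcOf (N-1) (by omega) hD
        refine ⟨by rw [Nat.sub_zero]; exact hGc, ?_⟩
        rw [Nat.sub_zero]
        have h := hblk (idx N (N-2)) (idx N (N-2+1))
        rw [blkP_super _ _ _ _ hN (by omega), blkP_super _ _ _ _ hN (by omega)] at h
        rw [show N-2+1 = N-1 from by omega] at h
        have h2 := neg_injective h
        rw [hD] at h2
        exact t_inj (cancel_inv_right (h2PD (N-1) (by omega)) h2)
      | succ m ih =>
        intro hm1
        obtain ⟨ihc, ihs⟩ := ih (by omega)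
        have hD : (Gc₁ (N-2-m))⁻¹ = (Gc₂ (N-2-m))⁻¹ := by
          have h := hblk (idx N (N-2-m)) (idx N (N-2-m))
          rw [blkP_diag_mid _ _ _ _ hN (by omega) (by omega),
            blkP_diag_mid _ _ _ _ hN (by omega) (by omega)] at h
          rw [show N-2-m+1 = N-1-m from by omega] at h
          rw [ihc, ihs] at h
          exact add_right_cancel h
        have hGc := hGcOf (N-2-m) (by omega) hD
        refine ⟨by rw [show N-1-(m+1) = N-2-m from by omega]; exact hGc, ?_⟩
        rw [show N-1-(m+1) = N-2-m from by omega]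
        have h := hblk (idx N (N-3-m)) (idx N (N-3-m+1))
        rw [blkP_super _ _ _ _ hN (by omega), blkP_super _ _ _ _ hN (by omega)] at h
        rw [show N-3-m+1 = N-2-m from by omega] at h
        have h2 := neg_injective h
        rw [hD] at h2
        exact t_inj (cancel_inv_right (h2PD (N-2-m) (by omega)) h2)
    have hGcMid : ∀ k, 1 ≤ k → k ≤ N-1 → Gc₁ k = Gc₂ k := by
      intro k hk1 hk2
      have h := (main (N-1-k) (by omega)).1
      rwa [show N-1-(N-1-k) = k from by omega] at h
    have hGsMid : ∀ k, 1 ≤ k → k ≤ N-1 → Gs₁ k = Gs₂ k := by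
      intro k hk1 hk2
      have h := (main (N-1-k) (by omega)).2
      rwa [show N-1-(N-1-k) = k from by omega] at h
    have hGnDown : ∀ m, m ≤ N-2 → Gn₁ (N-1-m) = Gn₂ (N-1-m) := by
      intro m
      induction m with
      | zero =>
        intro _
        rw [Nat.sub_zero]
        have h := hblk (idx N (N-1)) (idx N N)
        rw [blkP_lastN _ _ _ _ hN, blkP_lastN _ _ _ _ hN] at h
        have h2 := neg_injective h
        rw [hGcMid (N-1) (by omega) (by omega)] at h2
        exact cancel_inv_left (h2PD (N-1) (by omega)) h2
      | succ m ih =>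
        intro hm1
        have ihn := ih (by omega)
        rw [show N-1-(m+1) = N-2-m from by omega]
        have h := hblk (idx N (N-2-m)) (idx N N)
        rw [blkP_midN _ _ _ _ hN (by omega) (by omega),
          blkP_midN _ _ _ _ hN (by omega) (by omega)] at h
        rw [show N-2-m+1 = N-1-m from by omega] at h
        rw [hGsMid (N-1-m) (by omega) (by omega), hGcMid (N-1-m) (by omega) (by omega),
          ihn] at h
        have h3 := add_right_cancel h
        have h4 := neg_injective h3
        rw [hGcMid (N-2-m) (by omega) (by omega)] at h4
        exact cancel_inv_left (h2PD (N-2-m) (by omega)) h4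
    have hGnMid : ∀ k, 1 ≤ k → k ≤ N-1 → Gn₁ k = Gn₂ k := by
      intro k hk1 hk2
      have h := hGnDown (N-1-k) (by omega)
      rwa [show N-1-(N-1-k) = k from by omega] at h
    have hGcN : Gc₁ N = Gc₂ N := by
      apply hGcOf N le_rfl
      have h := hblk (idx N N) (idx N N)
      rw [blkP_diag_N _ _ _ _ hN, blkP_diag_N _ _ _ _ hN] at h
      rw [Finset.sum_congr rfl (fun t ht => by
        rw [hGnMid t (Finset.mem_Icc.mp ht).1 (Finset.mem_Icc.mp ht).2,
          hGcMid t (Finset.mem_Icc.mp ht).1 (Finset.mem_Icc.mp ht).2])] at h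
      exact add_right_cancel h
    have hGN0 : GN0₁ = GN0₂ := by
      have h := hblk (idx N 0) (idx N N)
      rw [blkP_0N _ _ _ _ hN, blkP_0N _ _ _ _ hN] at h
      rw [hGsMid 1 (by omega) (by omega), hGcMid 1 (by omega) (by omega),
        hGnMid 1 (by omega) (by omega), hGcN] at h
      have h2 : GN0₁ᵀ * (Gc₂ N)⁻¹ = GN0₂ᵀ * (Gc₂ N)⁻¹ := sub_right_injective h
      exact t_inj (cancel_inv_right (h2PD N le_rfl) h2)
    have hGc0 : Gc₁ 0 = Gc₂ 0 := by
      apply hGcOf 0 (by omega)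
      have h := hblk (idx N 0) (idx N 0)
      rw [blkP_diag_0 _ _ _ _ hN, blkP_diag_0 _ _ _ _ hN] at h
      rw [hGsMid 1 (by omega) (by omega), hGcMid 1 (by omega) (by omega), hGN0,
        hGcN] at h
      have h2 := add_right_cancel h
      exact add_right_cancel h2
    refine ⟨?_, hGsMid, hGnMid, hGN0⟩
    intro k hk
    by_cases h0 : k = 0
    · rw [h0]; exact hGc0
    · by_cases hN' : k = N
      · rw [hN']; exact hGcN
      · exact hGcMid k (by omega) (by omega)
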